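/- Let ω ∈ ℤ[X] be a polynomial of degree k ≥ 2, let 0 < α < 1 and ε > 0, and suppose 0 < ζ₁ ≤ N^{α − 2 − ε} and 0 < ζ₂ ≤ N^{α − k − 1 − ε}. Then there exists N₀ (depending on ω, α, ε) such that for all integers N ≥ N₀ the following holds: if W_ω(x, y; N) ≥ N^α for some (x, y) in the rectangle R = [u − ζ₁, u + ζ₁) × [v − ζ₂, v + ζ₂), then W_ω(a, b; N) ≥ N^α / 2 for every (a, b) ∈ R. -/

import Mathlib

open MeasureTheory Finset Polynomial

/-- `e(t) = exp(2πit)`. -/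
noncomputable def e (t : ℝ) : ℂ := Complex.exp (2 * Real.pi * Complex.I * t)

/-- The Weyl sum `S_ω(x, y; N) = ∑_{n=1}^{N} e(x·n + y·ω(n))`. -/
noncomputable def WeylS (ω : Polynomial ℤ) (x y : ℝ) (N : ℕ) : ℂ :=
  ∑ n ∈ Finset.Icc 1 N, e (x * (n : ℝ) + y * ((ω.eval (n : ℤ) : ℤ) : ℝ))

/-- `η(k)` from the paper. -/
def etaP (k : ℕ) : ℕ :=
  if 2 * k + 2 ≥ (Nat.sqrt (2 * k + 2)) ^ 2 + Nat.sqrt (2 * k + 2) then 0 else 1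

/-- `s₀(k)` from the paper. -/
def s0 (k : ℕ) : ℕ :=
  if k = 2 then 3 else if k = 3 then 5 else if k = 4 then 8 else if k = 5 then 12
  else if k = 6 then 18 else if k = 7 then 24 else if k = 8 then 31 else if k = 9 then 40
  else if k = 10 then 49 else k * (k - 1) / 2 + Nat.sqrt (2 * k + 2) - etaP k

/-- The completed sum
`W_ω(x, y; N) = ∑_{h=−N}^{N} (1/(|h|+1))·|∑_{n=1}^{N} e(h·n/N + x·n + y·ω(n))|`. -/
noncomputable def WeylW (ω : Polynomial ℤ) (x y : ℝ) (N : ℕ) : ℝ :=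
  ∑ h ∈ Finset.Icc (-(N : ℤ)) (N : ℤ), (1 / (|(h : ℝ)| + 1)) *
    ‖(∑ n ∈ Finset.Icc 1 N,
      e ((h : ℝ) * (n : ℝ) / (N : ℝ) + x * (n : ℝ) + y * ((ω.eval (n : ℤ) : ℤ) : ℝ)))‖


/-!
Moving `(x, y)` to `(a, b)` inside the rectangle changes each phase `h n / N + x n + y ω(n)` by at
most `|x - a| N + |y - b| |ω(n)| ≪ ζ₁ N + ζ₂ N ^ k ≤ N ^ (α - 1 - ε)`. Since `t ↦ e(t)` is
`2π`-Lipschitz, every inner sum over `n ≤ N` moves by `≪ N ^ (α - ε)`, and the weights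
`1 / (|h| + 1)` add up to `O(log N)`. Hence `W` changes by `≪ N ^ (α - ε) log N`, which is at most
`N ^ α / 2` once `N` is large.
-/

lemma norm_e (t : ℝ) : ‖e t‖ = 1 := by
  rw [e, ← Complex.norm_exp_ofReal_mul_I (2 * Real.pi * t)]
  push_cast
  ring_nf

lemma norm_e_sub_e_le (s t : ℝ) : ‖e t - e s‖ ≤ 2 * Real.pi * |t - s| := by
  have hfactor : e t - e s = e s * (Complex.exp (Complex.I * ↑(2 * Real.pi * (t - s))) - 1) := by
    simp only [e, mul_sub, mul_one, ← Complex.exp_add]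
    push_cast
    ring_nf
  rw [hfactor, norm_mul, norm_e, one_mul]
  refine Real.norm_exp_I_mul_ofReal_sub_one_le.trans_eq ?_
  rw [Real.norm_eq_abs, abs_mul, abs_of_pos Real.two_pi_pos]

lemma norm_sum_e_le_add {ι : Type*} (s : Finset ι) (f g : ι → ℝ) {δ : ℝ}
    (hfg : ∀ i ∈ s, |f i - g i| ≤ δ) :
    ‖∑ i ∈ s, e (f i)‖ ≤ ‖∑ i ∈ s, e (g i)‖ + #s * (2 * Real.pi * δ) := by
  have hdiff : ‖∑ i ∈ s, e (f i) - ∑ i ∈ s, e (g i)‖ ≤ #s * (2 * Real.pi * δ) := by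
    rw [← sum_sub_distrib, ← nsmul_eq_mul]
    refine (norm_sum_le _ _).trans (sum_le_card_nsmul _ _ _ fun i hi => ?_)
    exact (norm_e_sub_e_le _ _).trans (by gcongr; exact hfg i hi)
  linarith [norm_sub_norm_le (∑ i ∈ s, e (f i)) (∑ i ∈ s, e (g i))]

def coeffAbsSum (p : ℤ[X]) : ℝ := ∑ i ∈ range (p.natDegree + 1), |(p.coeff i : ℝ)|

lemma coeffAbsSum_nonneg (p : ℤ[X]) : 0 ≤ coeffAbsSum p :=
  sum_nonneg fun _ _ => abs_nonneg _

lemma abs_eval_le_of_abs_le (p : ℤ[X]) {m : ℤ} {R : ℝ} (hR : 1 ≤ R) (hm : |(m : ℝ)| ≤ R) :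
    |((p.eval m : ℤ) : ℝ)| ≤ coeffAbsSum p * R ^ p.natDegree := by
  rw [coeffAbsSum, eval_eq_sum_range, Int.cast_sum, sum_mul]
  refine (abs_sum_le_sum_abs _ _).trans (sum_le_sum fun i hi => ?_)
  rw [Int.cast_mul, Int.cast_pow, abs_mul, abs_pow]
  gcongr
  calc |(m : ℝ)| ^ i ≤ R ^ i := pow_le_pow_left₀ (abs_nonneg _) hm i
    _ ≤ R ^ p.natDegree := pow_le_pow_right₀ hR (Nat.lt_succ_iff.mp (mem_range.mp hi))

lemma sum_Icc_one_div_abs_add_one (N : ℕ) :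
    ∑ h ∈ Icc (-(N : ℤ)) N, 1 / (|(h : ℝ)| + 1) = 2 * harmonic (N + 1) - 1 := by
  induction N with
  | zero => norm_num
  | succ n ih =>
    have hIcc : Icc (-((n + 1 : ℕ) : ℤ)) ((n + 1 : ℕ) : ℤ) =
        insert (-((n : ℤ) + 1)) (insert ((n : ℤ) + 1) (Icc (-(n : ℤ)) n)) := by
      ext h
      simp only [mem_Icc, mem_insert]
      omega
    rw [hIcc, sum_insert (by simp only [mem_insert, mem_Icc]; omega),
      sum_insert (by simp only [mem_Icc]; omega), ih, harmonic_succ (n + 1)]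
    push_cast
    rw [abs_neg, abs_of_nonneg (by positivity)]
    ring

lemma sum_Icc_one_div_abs_add_one_le (N : ℕ) :
    ∑ h ∈ Icc (-(N : ℤ)) N, 1 / (|(h : ℝ)| + 1) ≤ 3 + 2 * Real.log N := by
  have hlast : ((N : ℝ) + 1)⁻¹ ≤ 1 := inv_le_one_of_one_le₀ (by simp)
  rw [sum_Icc_one_div_abs_add_one, harmonic_succ]
  push_cast
  linarith [harmonic_le_one_add_log N]

lemma WeylW_le_add (ω : ℤ[X]) (x y a b : ℝ) (N : ℕ) {δ : ℝ}
    (hδ : ∀ n ∈ Icc 1 N, |(x - a) * n + (y - b) * ((ω.eval (n : ℤ) : ℤ) : ℝ)| ≤ δ) :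
    WeylW ω x y N ≤ WeylW ω a b N +
      (∑ h ∈ Icc (-(N : ℤ)) N, 1 / (|(h : ℝ)| + 1)) * (N * (2 * Real.pi * δ)) := by
  have hinner (h : ℤ) :
      ‖∑ n ∈ Icc 1 N, e (h * n / N + x * n + y * ((ω.eval (n : ℤ) : ℤ) : ℝ))‖ ≤
        ‖∑ n ∈ Icc 1 N, e (h * n / N + a * n + b * ((ω.eval (n : ℤ) : ℤ) : ℝ))‖ +
          N * (2 * Real.pi * δ) := by
    simpa using norm_sum_e_le_add (Icc 1 N) _ _ fun n hn => by convert hδ n hn using 2; ring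
  calc WeylW ω x y N
      ≤ ∑ h ∈ Icc (-(N : ℤ)) N, 1 / (|(h : ℝ)| + 1) *
          (‖∑ n ∈ Icc 1 N, e (h * n / N + a * n + b * ((ω.eval (n : ℤ) : ℤ) : ℝ))‖ +
            N * (2 * Real.pi * δ)) := by
        unfold WeylW
        gcongr with h
        exact hinner h
    _ = _ := by simp only [mul_add, sum_add_distrib, sum_mul, WeylW]

lemma eventually_add_mul_log_le_rpow (c d : ℝ) {ε : ℝ} (hε : 0 < ε) :
    ∀ᶠ x : ℝ in Filter.atTop, c + d * Real.log x ≤ x ^ ε := by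
  have hlittle : (fun x => c + d * Real.log x) =o[Filter.atTop] fun x => x ^ ε :=
    (Asymptotics.isLittleO_const_left.2 <| .inr <|
      tendsto_norm_atTop_atTop.comp (tendsto_rpow_atTop hε)).add
      ((isLittleO_log_rpow_atTop hε).const_mul_left d)
  filter_upwards [hlittle.bound one_pos, Filter.eventually_ge_atTop 0] with x hx hx0
  rw [one_mul, Real.norm_eq_abs, Real.norm_eq_abs, abs_of_nonneg (Real.rpow_nonneg hx0 ε)] at hx
  exact (le_abs_self _).trans hx

lemma abs_sub_le_two_mul_of_mem_Ico {u ζ x a : ℝ} (hx : x ∈ Set.Ico (u - ζ) (u + ζ))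
    (ha : a ∈ Set.Ico (u - ζ) (u + ζ)) : |x - a| ≤ 2 * ζ := by
  rw [abs_le]; constructor <;> linarith [hx.1, hx.2, ha.1, ha.2]

lemma WeylW_le_add_of_mem_rectangle (ω : ℤ[X]) {N : ℕ} (hN : 1 ≤ N)
    {α ε ζ₁ ζ₂ u v x y a b : ℝ} (hζ₁ : ζ₁ ≤ (N : ℝ) ^ (α - 2 - ε))
    (hζ₂ : ζ₂ ≤ (N : ℝ) ^ (α - ω.natDegree - 1 - ε))
    (hx : x ∈ Set.Ico (u - ζ₁) (u + ζ₁)) (ha : a ∈ Set.Ico (u - ζ₁) (u + ζ₁))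
    (hy : y ∈ Set.Ico (v - ζ₂) (v + ζ₂)) (hb : b ∈ Set.Ico (v - ζ₂) (v + ζ₂)) :
    WeylW ω x y N ≤ WeylW ω a b N + (∑ h ∈ Icc (-(N : ℤ)) N, 1 / (|(h : ℝ)| + 1)) *
      (4 * Real.pi * (1 + coeffAbsSum ω) * (N : ℝ) ^ (α - ε)) := by
  set d := ω.natDegree
  have hNR : (1 : ℝ) ≤ N := by exact_mod_cast hN
  have hphase : ∀ n ∈ Icc 1 N, |(x - a) * n + (y - b) * ((ω.eval (n : ℤ) : ℤ) : ℝ)| ≤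
      2 * (N : ℝ) ^ (α - 2 - ε) * N + 2 * (N : ℝ) ^ (α - d - 1 - ε) * (coeffAbsSum ω * N ^ d) := by
    intro n hn
    have hnN : |(n : ℝ)| ≤ N := by rw [Nat.abs_cast]; exact_mod_cast (mem_Icc.1 hn).2
    have hωn := abs_eval_le_of_abs_le ω hNR (m := n) (by rwa [Int.cast_natCast])
    have hxa := abs_sub_le_two_mul_of_mem_Ico hx ha
    have hyb := abs_sub_le_two_mul_of_mem_Ico hy hb
    refine (abs_add_le _ _).trans ?_
    rw [abs_mul, abs_mul]
    gcongr <;> linarith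
  have hN0 : (N : ℝ) ≠ 0 := by positivity
  have h₁ : (N : ℝ) ^ (α - 2 - ε) * (N : ℝ) ^ 2 = (N : ℝ) ^ (α - ε) := by
    rw [← Real.rpow_add_natCast hN0]; ring_nf
  have h₂ : (N : ℝ) ^ (α - d - 1 - ε) * (N : ℝ) ^ (d + 1) = (N : ℝ) ^ (α - ε) := by
    rw [← Real.rpow_add_natCast hN0]; push_cast; ring_nf
  convert WeylW_le_add ω x y a b N hphase using 3
  calc _ = 4 * Real.pi * ((N : ℝ) ^ (α - 2 - ε) * (N : ℝ) ^ 2 +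
        coeffAbsSum ω * ((N : ℝ) ^ (α - d - 1 - ε) * (N : ℝ) ^ (d + 1))) := by rw [h₁, h₂]; ring
    _ = _ := by ring

theorem large_values_propagate_on_rectangles_general
    (k : ℕ) (ω : Polynomial ℤ) (hω : ω.natDegree = k)
    (α : ℝ) (ε : ℝ) (hε : 0 < ε) :
    ∃ N₀ : ℕ, ∀ N : ℕ, N₀ ≤ N → ∀ ζ₁ ζ₂ u v : ℝ,
      0 < ζ₁ → ζ₁ ≤ (N : ℝ) ^ (α - 2 - ε) →
      0 < ζ₂ → ζ₂ ≤ (N : ℝ) ^ (α - (k : ℝ) - 1 - ε) →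
      (∃ x ∈ Set.Ico (u - ζ₁) (u + ζ₁), ∃ y ∈ Set.Ico (v - ζ₂) (v + ζ₂),
        (N : ℝ) ^ α ≤ WeylW ω x y N) →
      ∀ a ∈ Set.Ico (u - ζ₁) (u + ζ₁), ∀ b ∈ Set.Ico (v - ζ₂) (v + ζ₂),
        (N : ℝ) ^ α / 2 ≤ WeylW ω a b N := by
  subst hω
  set K := 4 * Real.pi * (1 + coeffAbsSum ω)
  have hK : 0 ≤ K := by have := coeffAbsSum_nonneg ω; positivity
  obtain ⟨N₀, hN₀⟩ := Filter.eventually_atTop.1 <|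
    (tendsto_natCast_atTop_atTop.eventually (eventually_add_mul_log_le_rpow (6 * K) (4 * K) hε)).and
      (Filter.eventually_ge_atTop 1)
  refine ⟨N₀, fun N hN ζ₁ ζ₂ u v _ hζ₁ _ hζ₂ ⟨x, hx, y, hy, hW⟩ a ha b hb => ?_⟩
  obtain ⟨hlog, hN1⟩ := hN₀ N hN
  have herror : (∑ h ∈ Icc (-(N : ℤ)) N, 1 / (|(h : ℝ)| + 1)) * (K * (N : ℝ) ^ (α - ε)) ≤
      (N : ℝ) ^ α / 2 :=
    calc _ ≤ (3 + 2 * Real.log N) * (K * (N : ℝ) ^ (α - ε)) :=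
          mul_le_mul_of_nonneg_right (sum_Icc_one_div_abs_add_one_le N) (by positivity)
      _ = (6 * K + 4 * K * Real.log N) * (N : ℝ) ^ (α - ε) / 2 := by ring
      _ ≤ (N : ℝ) ^ ε * (N : ℝ) ^ (α - ε) / 2 := by gcongr
      _ = (N : ℝ) ^ α / 2 := by rw [← Real.rpow_add (by positivity)]; ring_nf
  linarith [WeylW_le_add_of_mem_rectangle ω hN1 hζ₁ hζ₂ hx ha hy hb]

theorem large_values_propagate_on_rectangles
    (k : ℕ) (hk : 2 ≤ k) (ω : Polynomial ℤ) (hω : ω.natDegree = k)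
    (α : ℝ) (hα0 : 0 < α) (hα1 : α < 1) (ε : ℝ) (hε : 0 < ε) :
    ∃ N₀ : ℕ, ∀ N : ℕ, N₀ ≤ N → ∀ ζ₁ ζ₂ u v : ℝ,
      0 < ζ₁ → ζ₁ ≤ (N : ℝ) ^ (α - 2 - ε) →
      0 < ζ₂ → ζ₂ ≤ (N : ℝ) ^ (α - (k : ℝ) - 1 - ε) →
      (∃ x ∈ Set.Ico (u - ζ₁) (u + ζ₁), ∃ y ∈ Set.Ico (v - ζ₂) (v + ζ₂),
        (N : ℝ) ^ α ≤ WeylW ω x y N) →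
      ∀ a ∈ Set.Ico (u - ζ₁) (u + ζ₁), ∀ b ∈ Set.Ico (v - ζ₂) (v + ζ₂),
        (N : ℝ) ^ α / 2 ≤ WeylW ω a b N :=
  large_values_propagate_on_rectangles_general k ω hω α ε hε
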